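/- Let X be a Hausdorff CoPolish space that is Fréchet–Urysohn, and let X_ω = {x ∈ X | x has a countable neighborhood basis}. Then the complement X_nc = X ∖ X_ω is closed in X, is countable, and is discrete in the subspace topology. -/

import Mathlib

/-!
Let `Kₙ` be the exhaustion. A point interior to some `Kₙ` has a countable neighbourhood basis,
since `Kₙ` is metrizable. Every compact set `C` lies in some `Kₙ`: points `cₙ ∈ C \ Kₙ` would form
an infinite closed discrete subset of `C`. If infinitely many points without countable basis lay
in one `Kₙ`, they would yield `xᵢ → y` with `xᵢ ≠ y` and `xᵢ ∉ interior Kᵢ`. Taking neighbourhoods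
`Uᵢ` of `xᵢ` whose closures avoid `y`, the Fréchet–Urysohn property applied twice gives a sequence
converging to `y` through the sets `Uᵢ \ Kᵢ` for unboundedly many `i`; together with its limit it
is compact but lies in no `Kₙ`. So the set meets every `Kₙ` in a finite set, which makes it closed,
discrete and countable.
-/

open Filter Topology Set

/-- A topological space is CoPolish if it is the direct limit of a monotone sequence of
compact metrizable subspaces. -/
def CoPolish (X : Type*) [TopologicalSpace X] : Prop :=
  ∃ K : ℕ → Set X, Monotone K ∧ (∀ n, IsCompact (K n)) ∧
    (∀ n, TopologicalSpace.MetrizableSpace (K n)) ∧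
    (⋃ n, K n) = Set.univ ∧
    ∀ U : Set X, IsOpen U ↔ ∀ n, IsOpen ((Subtype.val : K n → X) ⁻¹' U)

section

variable {X : Type*} [TopologicalSpace X]

theorem isCountablyGenerated_nhds_of_mem_nhds {s : Set X} [FirstCountableTopology s]
    {x : X} (hs : s ∈ 𝓝 x) : (𝓝 x).IsCountablyGenerated := by
  rw [← map_nhds_subtype_coe_eq_nhds (mem_of_mem_nhds hs) hs]
  infer_instance

theorem exists_seq_tendsto_ne_of_infinite_inter {K S : Set X} (hK : IsCompact K)
    [FirstCountableTopology K] (hS : (S ∩ K).Infinite) :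
    ∃ y, ∃ x : ℕ → X, (∀ i, x i ∈ S ∧ x i ≠ y) ∧ Tendsto x atTop (𝓝 y) := by
  have : CompactSpace K := isCompact_iff_compactSpace.1 hK
  have hT : (Subtype.val ⁻¹' S : Set K).Infinite := by
    refine Infinite.of_image Subtype.val ?_
    rwa [Subtype.image_preimage_coe, inter_comm]
  obtain ⟨y, hy⟩ := hT.exists_accPt_principal
  have hy' : y ∈ closure (Subtype.val ⁻¹' S \ {y}) :=
    mem_closure_iff_frequently.2 <| (accPt_iff_frequently.1 hy).mono fun _ h ↦ ⟨h.2, h.1⟩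
  obtain ⟨u, hu, hut⟩ := mem_closure_iff_seq_limit.1 hy'
  exact ⟨y, fun i ↦ u i, fun i ↦ ⟨(hu i).1, fun h ↦ (hu i).2 (Subtype.ext h)⟩,
    (continuous_subtype_val.tendsto y).comp hut⟩

theorem exists_isCompact_frequently_inter_nonempty [FrechetUrysohnSpace X] {A : ℕ → Set X}
    {y : X} (hy : y ∈ closure (⋃ i, A i)) (hA : ∀ i, y ∉ closure (A i)) :
    ∃ C, IsCompact C ∧ ∃ᶠ i in atTop, (C ∩ A i).Nonempty := by
  obtain ⟨w, hwA, hwy⟩ := mem_closure_iff_seq_limit.1 hy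
  refine ⟨insert y (range w), hwy.isCompact_insert_range, fun hC ↦ ?_⟩
  obtain ⟨N, hN⟩ := eventually_atTop.1 hC
  have hw : ∀ l, w l ∈ ⋃ i < N, A i := fun l ↦ by
    obtain ⟨i, hi⟩ := mem_iUnion.1 (hwA l)
    exact mem_biUnion (not_le.1 fun hNi ↦ hN i hNi ⟨w l, mem_insert_of_mem _ ⟨l, rfl⟩, hi⟩) hi
  have := mem_closure_of_tendsto hwy (Eventually.of_forall hw)
  rw [closure_iUnion₂_lt_nat] at this
  obtain ⟨i, -, hi⟩ := mem_iUnion₂.1 this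
  exact hA i hi

namespace Topology.IsCoherentWith

variable [T1Space X] {S : Set (Set X)}

theorem isClosed_of_finite_inter (hS : IsCoherentWith S) {T : Set X}
    (hT : ∀ s ∈ S, (T ∩ s).Finite) : IsClosed T :=
  hS.isClosed_iff.2 fun s hs ↦ Finite.isClosed <| Finite.of_finite_image
    (by rw [Subtype.image_preimage_coe, inter_comm]; exact hT s hs) Subtype.val_injective.injOn

theorem isDiscrete_of_finite_inter (hS : IsCoherentWith S) {T : Set X}
    (hT : ∀ s ∈ S, (T ∩ s).Finite) : IsDiscrete T :=
  isDiscrete_iff_forall_mem_exists_isClosed.2 fun t ht ↦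
    ⟨t, hS.isClosed_of_finite_inter fun s hs ↦ (hT s hs).subset (inter_subset_inter_left _ ht),
      inter_eq_left.2 ht⟩

end Topology.IsCoherentWith

section MonotoneExhaustion

variable {K : ℕ → Set X}

theorem exists_subset_of_isCompact [T1Space X] (hK : IsCoherentWith (range K)) (hmono : Monotone K)
    (hcover : ⋃ n, K n = univ) {C : Set X} (hC : IsCompact C) : ∃ n, C ⊆ K n := by
  by_contra! hCK
  choose c hcC hcK using fun n ↦ not_subset.1 (hCK n)
  have hfin : ∀ s ∈ range K, (range c ∩ s).Finite := by
    rintro _ ⟨m, rfl⟩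
    refine ((finite_Iio m).image c).subset ?_
    rintro _ ⟨⟨k, rfl⟩, hk⟩
    exact ⟨k, not_le.1 fun hmk ↦ hcK k (hmono hmk hk), rfl⟩
  have hc : (range c).Finite :=
    (hC.of_isClosed_subset (hK.isClosed_of_finite_inter hfin) (range_subset_iff.2 hcC)).finite
      (hK.isDiscrete_of_finite_inter hfin)
  choose n hn using iUnion_eq_univ_iff.1 hcover
  have hN : range c ⊆ K (hc.toFinset.sup n) := fun x hx ↦
    hmono (Finset.le_sup (hc.mem_toFinset.2 hx)) (hn x)
  exact hcK _ (hN (mem_range_self _))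

theorem exists_mem_interior_of_tendsto [T2Space X] [FrechetUrysohnSpace X] (hmono : Monotone K)
    (hK : ∀ C, IsCompact C → ∃ n, C ⊆ K n) {x : ℕ → X} {y : X}
    (hxy : ∀ i, x i ≠ y) (hx : Tendsto x atTop (𝓝 y)) : ∃ i, x i ∈ interior (K i) := by
  by_contra! hint
  choose U V hU hV hxU hyV hUV using fun i ↦ t2_separation (hxy i)
  have hxA : ∀ i, x i ∈ closure (U i \ K i) := fun i ↦
    (hU i).inter_closure (t := (K i)ᶜ) ⟨hxU i, by rw [closure_compl]; exact hint i⟩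
  have hyA : ∀ i, y ∉ closure (U i \ K i) := fun i hy ↦
    ((hUV i).closure_left (hV i)).notMem_of_mem_left (closure_mono sdiff_subset hy) (hyV i)
  have hy : y ∈ closure (⋃ i, U i \ K i) :=
    isClosed_closure.mem_of_tendsto hx <| Eventually.of_forall fun i ↦
      closure_mono (subset_iUnion (fun i ↦ U i \ K i) i) (hxA i)
  obtain ⟨C, hC, hCA⟩ := exists_isCompact_frequently_inter_nonempty hy hyA
  obtain ⟨N, hCN⟩ := hK C hC
  obtain ⟨i, hNi, z, hzC, -, hzK⟩ := hCA.forall_exists_of_atTop N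
  exact hzK (hmono hNi (hCN hzC))

end MonotoneExhaustion

end

/-- In a Hausdorff Fréchet–Urysohn CoPolish space, the set of points without a countable
neighbourhood basis is closed, countable, and discrete in the subspace topology. -/
theorem xnc_closed_countable_discrete_of_coPolish {X : Type*} [TopologicalSpace X]
    [T2Space X] [FrechetUrysohnSpace X] (h : CoPolish X) :
    IsClosed {x : X | ¬ (nhds x).IsCountablyGenerated} ∧
    {x : X | ¬ (nhds x).IsCountablyGenerated}.Countable ∧
    DiscreteTopology {x : X | ¬ (nhds x).IsCountablyGenerated} := by
  obtain ⟨K, hmono, hcomp, hmetr, hcover, hopen⟩ := h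
  set Nc := {x : X | ¬ (nhds x).IsCountablyGenerated}
  have hK : IsCoherentWith (range K) := ⟨fun U hU ↦ (hopen U).2 fun n ↦ hU _ ⟨n, rfl⟩⟩
  have hfin : ∀ s ∈ range K, (Nc ∩ s).Finite := by
    rintro _ ⟨n, rfl⟩
    by_contra hinf
    have := hmetr n
    obtain ⟨y, x, hxNc, hx⟩ := exists_seq_tendsto_ne_of_infinite_inter (hcomp n) hinf
    obtain ⟨i, hi⟩ := exists_mem_interior_of_tendsto hmono
      (fun _ ↦ exists_subset_of_isCompact hK hmono hcover) (fun i ↦ (hxNc i).2) hx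
    exact (hxNc i).1 (isCountablyGenerated_nhds_of_mem_nhds (mem_interior_iff_mem_nhds.1 hi))
  refine ⟨hK.isClosed_of_finite_inter hfin, ?_, (hK.isDiscrete_of_finite_inter hfin).to_subtype⟩
  rw [← inter_univ Nc, ← hcover, inter_iUnion]
  exact countable_iUnion fun n ↦ (hfin _ ⟨n, rfl⟩).countable
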